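/- Let A be an associative unital algebra over a field of characteristic zero, let a, b, d ∈ A with a nilpotent, and let α_1, α_2, … be the Taylor coefficients of the Todd function x/(e^x - 1) = 1 + α_1 x + α_2 x^2 + ⋯. Then exp(a)·d = (d+b)·exp(a) holds if and only if [a,d] = b + Σ_{k≥1} α_k (ad_a)^k(b), where ad_a(x)=[a,x] and the sum is finite by nilpotency of a. -/

import Mathlib

noncomputable def expNil {K A : Type*} [Field K] [Ring A] [Algebra K A]
    (a : A) (N : ℕ) : A :=
  ∑ k ∈ Finset.range N, (k.factorial : K)⁻¹ • a ^ k

/-- Taylor coefficients of the Todd function `x/(e^x - 1)`, defined as the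
multiplicative inverse of `(e^x-1)/x = ∑ x^k/(k+1)!` in `ℚ[[x]]`. -/
noncomputable def toddCoeff (k : ℕ) : ℚ :=
  PowerSeries.coeff (R := ℚ) k (PowerSeries.mk fun n => (1 : ℚ) / (n + 1).factorial)⁻¹

/-!
Write `D = ad_a = L_a - R_a`. Left and right multiplications commute, so
`exp D = L_{exp a} ∘ R_{exp (-a)}`, and `exp a · d = (d + b) · exp a` says `exp D d = d + b`.
Now `exp D - 1 = F(D) D` with `F(x) = (e^x - 1)/x`, and `F(D)` is invertible with inverse the
Todd series evaluated at `D`, so the condition becomes `D d = Todd(D) b`. Evaluating a power series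
at a nilpotent element is a ring homomorphism, which transports the identities
`e^X = 1 + F X` and `F · F⁻¹ = 1` from `K⟦X⟧` to `Module.End K A`.
-/

open Finset PowerSeries

namespace PowerSeries

variable {R B : Type*} [CommRing R] [Ring B] [Algebra R B] {x : B} {N : ℕ}

theorem aeval_trunc_coe_of_pow_eq_zero (hx : x ^ N = 0) (p : Polynomial R) :
    Polynomial.aeval x (trunc N (p : R⟦X⟧)) = Polynomial.aeval x p := by
  obtain ⟨q, hq⟩ : Polynomial.X ^ N ∣ trunc N (p : R⟦X⟧) - p := by
    refine Polynomial.X_pow_dvd_iff.mpr fun d hd => ?_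
    simp [coeff_trunc, hd]
  rw [← sub_eq_zero, ← map_sub, hq, map_mul, Polynomial.aeval_X_pow, hx, zero_mul]

noncomputable def aevalOfPowEqZero (hx : x ^ N = 0) : R⟦X⟧ →+* B where
  toFun f := Polynomial.aeval x (trunc N f)
  map_one' := by rw [← Polynomial.coe_one, aeval_trunc_coe_of_pow_eq_zero hx, map_one]
  map_mul' f g := by
    rw [← trunc_trunc_mul_trunc, ← Polynomial.coe_mul, aeval_trunc_coe_of_pow_eq_zero hx, map_mul]
  map_zero' := by simp
  map_add' f g := by simp

theorem aevalOfPowEqZero_apply (hx : x ^ N = 0) (f : R⟦X⟧) :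
    aevalOfPowEqZero hx f = ∑ k ∈ range N, coeff k f • x ^ k := by
  simp [aevalOfPowEqZero, Polynomial.aeval_def, eval₂_trunc_eq_sum_range, Algebra.smul_def]

theorem aevalOfPowEqZero_X (hx : x ^ N = 0) : aevalOfPowEqZero hx (X : R⟦X⟧) = x := by
  rw [← Polynomial.coe_X]
  exact (aeval_trunc_coe_of_pow_eq_zero hx _).trans (Polynomial.aeval_X x)

theorem aevalOfPowEqZero_exp {K : Type*} [Field K] [CharZero K] [Algebra K B] [Module ℚ B]
    (hx : x ^ N = 0) : aevalOfPowEqZero hx (exp K) = IsNilpotent.exp x := by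
  rw [aevalOfPowEqZero_apply, IsNilpotent.exp_eq_sum hx]
  refine sum_congr rfl fun k _ => ?_
  rw [coeff_exp, eq_ratCast, ratCast_smul_eq K ℚ, one_div, Rat.cast_id]

end PowerSeries

theorem expNil_eq_exp {K A : Type*} [Field K] [CharZero K] [Ring A] [Algebra K A] [Module ℚ A]
    {a : A} {N : ℕ} (ha : a ^ N = 0) : expNil (K := K) a N = IsNilpotent.exp a := by
  rw [← aevalOfPowEqZero_exp (K := K) ha, aevalOfPowEqZero_apply]
  simp [expNil, coeff_exp]

noncomputable def expSubOneDivX : ℚ⟦X⟧ := mk fun n => 1 / (n + 1).factorial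

theorem constantCoeff_expSubOneDivX : constantCoeff expSubOneDivX = 1 := by
  simp [expSubOneDivX]

theorem coeff_inv_expSubOneDivX (k : ℕ) : coeff k expSubOneDivX⁻¹ = toddCoeff k := rfl

theorem toddCoeff_zero : toddCoeff 0 = 1 := by
  rw [← coeff_inv_expSubOneDivX, coeff_zero_eq_constantCoeff_apply, constantCoeff_inv,
    constantCoeff_expSubOneDivX, inv_one]

theorem expSubOneDivX_mul_inv : expSubOneDivX * expSubOneDivX⁻¹ = 1 :=
  PowerSeries.mul_inv_cancel _ (by rw [constantCoeff_expSubOneDivX]; exact one_ne_zero)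

theorem exp_eq_one_add_expSubOneDivX_mul_X (K : Type*) [Ring K] [Algebra ℚ K] :
    exp K = 1 + map (algebraMap ℚ K) expSubOneDivX * X := by
  ext (_ | n)
  · simp
  · simp [coeff_exp, coeff_succ_mul_X, expSubOneDivX]

section Todd

variable {K B : Type*} [Field K] [CharZero K] [Ring B] [Algebra K B] {x : B} {N : ℕ}

theorem aevalOfPowEqZero_expSubOneDivX_mul_inv (hx : x ^ N = 0) :
    aevalOfPowEqZero hx (map (algebraMap ℚ K) expSubOneDivX) *
      aevalOfPowEqZero hx (map (algebraMap ℚ K) expSubOneDivX⁻¹) = 1 := by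
  rw [← map_mul, ← map_mul (PowerSeries.map _), expSubOneDivX_mul_inv, map_one, map_one]

theorem aevalOfPowEqZero_inv_expSubOneDivX_mul (hx : x ^ N = 0) :
    aevalOfPowEqZero hx (map (algebraMap ℚ K) expSubOneDivX⁻¹) *
      aevalOfPowEqZero hx (map (algebraMap ℚ K) expSubOneDivX) = 1 := by
  rw [← map_mul, mul_comm, map_mul, aevalOfPowEqZero_expSubOneDivX_mul_inv]

theorem aevalOfPowEqZero_inv_expSubOneDivX_apply {M : Type*} [AddCommGroup M] [Module K M]
    {D : Module.End K M} {n : ℕ} (hD : D ^ (n + 1) = 0) (y : M) :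
    aevalOfPowEqZero hD (map (algebraMap ℚ K) expSubOneDivX⁻¹) y =
      y + ∑ k ∈ Icc 1 n, (toddCoeff k : K) • (D ^ k) y := by
  rw [aevalOfPowEqZero_apply, LinearMap.sum_apply, range_eq_Ico,
    sum_eq_sum_Ico_succ_bot (by omega : 0 < n + 1), Ico_add_one_right_eq_Icc]
  simp [coeff_inv_expSubOneDivX, toddCoeff_zero]

end Todd

namespace LinearMap

variable {K A : Type*} [CommRing K] [Ring A] [Algebra K A] {a : A} {N : ℕ}

theorem neg_mulRight : -mulRight K a = mulRight K (-a) := by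
  ext; simp

theorem mulLeft_sub_mulRight_pow_eq_zero (ha : a ^ N = 0) :
    (mulLeft K a - mulRight K a) ^ (N + N - 1) = 0 := by
  have hL : mulLeft K a ^ N = 0 := by rw [pow_mulLeft, ha, mulLeft_zero_eq_zero]
  have hR : mulRight K (-a) ^ N = 0 := by
    rw [pow_mulRight, neg_pow, ha, mul_zero, mulRight_zero_eq_zero]
  rw [sub_eq_add_neg, neg_mulRight]
  exact (commute_mulLeft_right a (-a)).add_pow_add_eq_zero_of_pow_eq_zero hL hR

theorem exp_mulLeft_sub_mulRight_apply [Module ℚ A] (ha : a ^ N = 0) (d : A) :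
    IsNilpotent.exp (mulLeft K a - mulRight K a) d =
      IsNilpotent.exp a * d * IsNilpotent.exp (-a) := by
  have ha' : (-a) ^ N = 0 := by rw [neg_pow, ha, mul_zero]
  have hL : mulLeft K a ^ N = 0 := by rw [pow_mulLeft, ha, mulLeft_zero_eq_zero]
  have hR : mulRight K (-a) ^ N = 0 := by rw [pow_mulRight, ha', mulRight_zero_eq_zero]
  rw [sub_eq_add_neg, neg_mulRight, IsNilpotent.exp_add_of_commute
    (commute_mulLeft_right a (-a)) ⟨N, hL⟩ ⟨N, hR⟩, IsNilpotent.exp_eq_sum hL,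
    IsNilpotent.exp_eq_sum hR, IsNilpotent.exp_eq_sum ha, IsNilpotent.exp_eq_sum ha']
  simp [sum_mul, mul_sum, pow_mulLeft, pow_mulRight, smul_mul_assoc, mul_smul_comm, mul_assoc]

end LinearMap

/-- Proposition 1: `exp(a)·d = (d+b)·exp(a)` iff
`[a,d] = b + ∑_{k≥1} α_k (ad_a)^k(b)` where `x/(e^x-1) = ∑ α_k x^k`. -/
theorem exp_intertwine_iff_todd {K A : Type*} [Field K] [CharZero K] [Ring A] [Algebra K A]
    (a b d : A) (N : ℕ) (hN : a ^ N = 0) :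
    expNil (K := K) a N * d = (d + b) * expNil (K := K) a N ↔
    a * d - d * a = b + ∑ k ∈ Finset.Icc 1 (2 * N), ((toddCoeff k : K)) •
      (((LinearMap.mulLeft K a - LinearMap.mulRight K a) ^ k) b) := by
  -- `IsNilpotent.exp` is stated over `ℚ`; any `ℚ`-module structure agrees with the one from `K`.
  let _ : Module ℚ A := Module.compHom A (algebraMap ℚ K)
  set D := LinearMap.mulLeft K a - LinearMap.mulRight K a
  have hD : D ^ (2 * N + 1) = 0 :=
    pow_eq_zero_of_le (by omega) (LinearMap.mulLeft_sub_mulRight_pow_eq_zero hN)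
  set φ := aevalOfPowEqZero (R := K) hD
  have hexp : IsNilpotent.exp D = 1 + φ (map (algebraMap ℚ K) expSubOneDivX) * D := by
    rw [← aevalOfPowEqZero_exp (K := K) hD, exp_eq_one_add_expSubOneDivX_mul_X, map_add, map_one,
      map_mul, aevalOfPowEqZero_X]
  have hconj : IsNilpotent.exp D d = d + b ↔
      IsNilpotent.exp a * d = (d + b) * IsNilpotent.exp a := by
    rw [LinearMap.exp_mulLeft_sub_mulRight_apply hN,
      ← (IsNilpotent.isUnit_exp ⟨N, hN⟩).mul_left_inj, mul_assoc _ (IsNilpotent.exp (-a)),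
      IsNilpotent.exp_neg_mul_exp_self ⟨N, hN⟩, mul_one]
  have hinv : φ (map (algebraMap ℚ K) expSubOneDivX) (D d) = b ↔
      D d = φ (map (algebraMap ℚ K) expSubOneDivX⁻¹) b := by
    constructor <;> intro h
    · rw [← h, ← Module.End.mul_apply, aevalOfPowEqZero_inv_expSubOneDivX_mul,
        Module.End.one_apply]
    · rw [h, ← Module.End.mul_apply, aevalOfPowEqZero_expSubOneDivX_mul_inv, Module.End.one_apply]
  rw [expNil_eq_exp hN, ← hconj, hexp, LinearMap.add_apply, Module.End.one_apply,
    Module.End.mul_apply, add_right_inj, hinv, aevalOfPowEqZero_inv_expSubOneDivX_apply]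
  rfl
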